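/- arXiv:1811.01672 — 3 statements merged into one kernel-verified Lean document; each statement's English description precedes it below -/
import Mathlib

section
/- The encoding Enc from binary strings of length 2^k to rooted trees is injective: if Enc(S) and Enc(S') are isomorphic as rooted trees, then S = S'. Equivalently, Dec(Enc(S)) = S for all S ∈ {0,1}^{2^k}. -/
/-- Rooted trees with branching at most 2 (sufficient for the encoding `Enc`). -/
inductive RT : Type
  | leaf : RT
  | node1 : RT → RT
  | node2 : RT → RT → RT

/-- Isomorphism of rooted trees: children of a binary node may be swapped. -/
inductive RTIso : RT → RT → Prop
  | leaf : RTIso .leaf .leaf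
  | node1 {t t'} : RTIso t t' → RTIso (.node1 t) (.node1 t')
  | node2 {a b a' b'} : RTIso a a' → RTIso b b' → RTIso (.node2 a b) (.node2 a' b')
  | node2swap {a b a' b'} : RTIso a b' → RTIso b a' → RTIso (.node2 a b) (.node2 a' b')

/-- The encoding `Enc(S)` of a `2^k`-bit string `S` as a rooted tree. -/
def enc : (k : ℕ) → (Fin (2 ^ k) → Bool) → RT
  | 0, S =>
      if S ⟨0, by norm_num⟩ then .node2 (.node1 .leaf) (.node1 .leaf)
      else .node2 .leaf .leaf
  | k + 1, S =>
      .node2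
        (.node1 (enc k fun i =>
          S ⟨(i : ℕ), lt_of_lt_of_le i.isLt (Nat.pow_le_pow_right (by norm_num) (Nat.le_succ k))⟩))
        (enc k fun i =>
          S ⟨2 ^ k + (i : ℕ), by
            have h := i.isLt
            have h2 : 2 ^ (k + 1) = 2 ^ k + 2 ^ k := by ring
            omega⟩)

lemma enc_node2 (k : ℕ) (S : Fin (2 ^ k) → Bool) : ∃ a b, enc k S = .node2 a b := by
  cases k with
  | zero => simp only [enc]; split <;> exact ⟨_, _, rfl⟩
  | succ k => exact ⟨_, _, rfl⟩

/-- The encoding is injective up to rooted-tree isomorphism: `Enc(S) ≅ Enc(S')` implies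
`S = S'` (equivalently, the decoding procedure inverts the encoding). -/
theorem stmt6 (k : ℕ) (S S' : Fin (2 ^ k) → Bool)
    (h : RTIso (enc k S) (enc k S')) : S = S' := by
  induction k with
  | zero =>
    have key : S ⟨0, by norm_num⟩ = S' ⟨0, by norm_num⟩ := by
      simp only [enc] at h
      split_ifs at h with hb hb'
      · rw [hb, hb']
      · exfalso; cases h <;> rename_i h1 h2 <;> cases h1 <;> (rename_i h; cases h)
      · exfalso; cases h <;> rename_i h1 h2 <;> cases h1
      · rename_i hb'; rw [Bool.not_eq_true] at hb hb'; rw [hb, hb']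
    funext i
    have hi : i = ⟨0, by norm_num⟩ := by omega
    rw [hi, key]
  | succ k IH =>
    simp only [enc] at h
    cases h with
    | node2 h1 h2 =>
      cases h1 with
      | node1 h1 =>
        have e1 := IH _ _ h1
        have e2 := IH _ _ h2
        funext i
        rcases lt_or_ge (i : ℕ) (2 ^ k) with hl | hl
        · have := congrFun e1 ⟨i, hl⟩
          simpa using this
        · have hlt : (i : ℕ) - 2 ^ k < 2 ^ k := by
            have := i.isLt
            have h2 : 2 ^ (k + 1) = 2 ^ k + 2 ^ k := by ring
            omega
          have := congrFun e2 ⟨(i : ℕ) - 2 ^ k, hlt⟩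
          simp only at this
          have hi : i = ⟨2 ^ k + ((i : ℕ) - 2 ^ k), by
              have := i.isLt
              have h2 : 2 ^ (k + 1) = 2 ^ k + 2 ^ k := by ring
              omega⟩ := by ext; simp; omega
          rw [hi]; exact this
    | node2swap h1 h2 =>
      obtain ⟨a, b, hab⟩ := enc_node2 k (fun i => S' ⟨2 ^ k + (i : ℕ), by
        have h := i.isLt
        have h2 : 2 ^ (k + 1) = 2 ^ k + 2 ^ k := by ring
        omega⟩)
      rw [hab] at h1
      cases h1
end

section
/- Let P be an LCL problem on directed paths with checking radius r, and let ∼ be the type equivalence relation on input-labeled directed paths (two paths are equivalent if their boundary 2r-prefixes and 2r-suffixes carry identical input labels and they admit exactly the same set of extendible boundary output labelings). Then ∼ is an equivalence relation, and type is a congruence with respect to appending a symbol: there is a function g with Type(P ++ [a]) = g(Type(P), a) for all paths P of length ≥ 1 and symbols a. -/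
set_option maxHeartbeats 1000000

variable {Sin Sout : Type*}

/-- Position in the path `P` of the `i`-th boundary node. -/
def posIdx (r : ℕ) (P : List Sin) (i : Fin (4 * r)) : ℕ :=
  if (i : ℕ) < 2 * r then (i : ℕ) else P.length - 4 * r + (i : ℕ)

/-- Local consistency at position `j` (window clipped to the path). -/
def consistentAt (r : ℕ) (ok : List (Sin × Sout) → Prop)
    (P : List Sin) (out : List Sout) (j : ℕ) : Prop :=
  ok (((P.zip out).drop (j - r)).take (j + r + 1 - (j - r)))

/-- A boundary output labeling is extendible. -/
def Extendible [Inhabited Sout] (r : ℕ) (ok : List (Sin × Sout) → Prop)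
    (P : List Sin) (L : Fin (4 * r) → Sout) : Prop :=
  ∃ out : List Sout, out.length = P.length ∧
    (∀ i : Fin (4 * r), out.getD (posIdx r P i) default = L i) ∧
    ∀ j : ℕ, r ≤ j → j + r < P.length → consistentAt r ok P out j

/-- The type equivalence relation on input-labeled directed paths: for long paths,
boundary input labels agree and the same boundary output labelings are extendible;
short paths are equivalent only to themselves. -/
def pathEquiv [Inhabited Sout] (r : ℕ) (ok : List (Sin × Sout) → Prop)
    (P P' : List Sin) : Prop :=
  if 4 * r ≤ P.length ∧ 4 * r ≤ P'.length then
    P.take (2 * r) = P'.take (2 * r) ∧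
    P.drop (P.length - 2 * r) = P'.drop (P'.length - 2 * r) ∧
    ∀ L : Fin (4 * r) → Sout, Extendible r ok P L ↔ Extendible r ok P' L
  else P = P'

lemma zipDrop {α β} (l : List α) (l' : List β) (m : ℕ) :
    (l.zip l').drop m = (l.drop m).zip (l'.drop m) := by
  apply List.ext_getElem
  · simp [List.length_zip]; omega
  · intro n h1 h2
    simp [List.getElem_drop, List.getElem_zip]

lemma pathEquiv_refl [Inhabited Sout] (r : ℕ) (ok : List (Sin × Sout) → Prop)
    (P : List Sin) : pathEquiv r ok P P := by
  unfold pathEquiv; split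
  · exact ⟨rfl, rfl, fun L => Iff.rfl⟩
  · rfl

lemma dropBoundary [Inhabited Sout] (r : ℕ) (P P' : List Sin) (o o' : List Sout)
    (hP : 4 * r ≤ P.length) (hP' : 4 * r ≤ P'.length)
    (ho : o.length = P.length) (ho' : o'.length = P'.length)
    (hbd' : ∀ i : Fin (4 * r), o'.getD (posIdx r P' i) default
      = o.getD (posIdx r P i) default) :
    o.drop (P.length - 2 * r) = o'.drop (P'.length - 2 * r) := by
  apply List.ext_getElem
  · simp [ho, ho']; omega
  · intro k h1 h2
    have hk : k < 2 * r := by simp [ho] at h1; omega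
    have hb := hbd' ⟨2 * r + k, by omega⟩
    have p2 : posIdx r P ⟨2 * r + k, by omega⟩ = P.length - 2 * r + k := by
      simp only [posIdx]; rw [if_neg (by omega)]; omega
    have p2' : posIdx r P' ⟨2 * r + k, by omega⟩ = P'.length - 2 * r + k := by
      simp only [posIdx]; rw [if_neg (by omega)]; omega
    rw [p2, p2'] at hb
    have e1 : P.length - 2 * r + k < o.length := by omega
    have e2 : P'.length - 2 * r + k < o'.length := by omega
    rw [List.getD_eq_getElem o default e1, List.getD_eq_getElem o' default e2] at hb
    simp only [List.getElem_drop]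
    exact hb.symm

/-- The key transfer lemma: an extendible labeling of `P ++ [a]` is extendible on `P' ++ [a]`. -/
lemma extend_step [Inhabited Sout] (r : ℕ) (hr : 0 < r)
    (ok : List (Sin × Sout) → Prop) (P P' : List Sin) (a : Sin)
    (hP : 4 * r ≤ P.length) (hP' : 4 * r ≤ P'.length)
    (hsuf : P.drop (P.length - 2 * r) = P'.drop (P'.length - 2 * r))
    (hext : ∀ L, Extendible r ok P L → Extendible r ok P' L)
    (L : Fin (4 * r) → Sout) :
    Extendible r ok (P ++ [a]) L → Extendible r ok (P' ++ [a]) L := by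
  rintro ⟨out, hlen, hbd, hcons⟩
  have hlen1 : out.length = P.length + 1 := by simpa using hlen
  obtain hnil | ⟨o, c, hoc⟩ := out.eq_nil_or_concat
  · rw [hnil] at hlen1; simp at hlen1
  simp only [List.concat_eq_append] at hoc
  subst hoc
  have ho : o.length = P.length := by simpa using hlen1
  have hz : (P ++ [a]).zip (o ++ [c]) = P.zip o ++ [(a, c)] := by
    rw [List.zip_append ho.symm]; rfl
  have hzl : (P.zip o).length = P.length := by simp [ho]
  -- P itself with o is an extension witnessing its own boundary labeling
  have hPext : Extendible r ok P (fun i => o.getD (posIdx r P i) default) := by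
    refine ⟨o, ho, fun i => rfl, ?_⟩
    intro j hj hjn
    have h1 := hcons j hj (by simp; omega)
    unfold consistentAt at h1 ⊢
    have ht : j + r + 1 - (j - r) = 2 * r + 1 := by omega
    rw [ht] at h1 ⊢
    have hd : j - r ≤ (P.zip o).length := by omega
    rw [hz, List.drop_append_of_le_length hd] at h1
    have htk : 2 * r + 1 ≤ ((P.zip o).drop (j - r)).length := by
      simp [hzl]; omega
    rw [List.take_append_of_le_length htk] at h1
    exact h1
  obtain ⟨o', ho', hbd', hcons'⟩ := hext _ hPext
  simp only [] at hbd'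
  have hz' : (P' ++ [a]).zip (o' ++ [c]) = P'.zip o' ++ [(a, c)] := by
    rw [List.zip_append ho'.symm]; rfl
  have hz'l : (P'.zip o').length = P'.length := by simp [ho']
  refine ⟨o' ++ [c], by simp [ho'], ?_, ?_⟩
  · -- boundary condition
    intro i
    have hi4 := i.isLt
    by_cases hi : (i : ℕ) < 2 * r
    · have e1 : posIdx r (P' ++ [a]) i = (i : ℕ) := by simp [posIdx, hi]
      have e2 : posIdx r (P ++ [a]) i = (i : ℕ) := by simp [posIdx, hi]
      have e3 : posIdx r P i = (i : ℕ) := by simp [posIdx, hi]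
      have e3' : posIdx r P' i = (i : ℕ) := by simp [posIdx, hi]
      have h0 := hbd' i
      rw [e3, e3'] at h0
      have h1 := hbd i
      have b2 : (i : ℕ) < o.length := by omega
      have b1 : (i : ℕ) < o'.length := by omega
      rw [e2, List.getD_append o [c] default _ b2] at h1
      rw [e1, List.getD_append o' [c] default _ b1, h0]
      exact h1
    · by_cases htop : (i : ℕ) = 4 * r - 1
      · have e1 : posIdx r (P' ++ [a]) i = P'.length := by
          simp only [posIdx, if_neg hi, List.length_append, List.length_cons,
            List.length_nil]
          omega
        have e2 : posIdx r (P ++ [a]) i = P.length := by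
          simp only [posIdx, if_neg hi, List.length_append, List.length_cons,
            List.length_nil]
          omega
        have h1 := hbd i
        have b2 : o.length ≤ P.length := by omega
        have b1 : o'.length ≤ P'.length := by omega
        rw [e2, List.getD_append_right o [c] default _ b2, ho] at h1
        simp only [Nat.sub_self, List.getD_cons_zero] at h1
        rw [e1, List.getD_append_right o' [c] default _ b1, ho']
        simpa using h1
      · -- 2r ≤ i < 4r - 1
        set i1 : Fin (4 * r) := ⟨(i : ℕ) + 1, by omega⟩ with hi1
        have e1 : posIdx r (P' ++ [a]) i = P'.length - 4 * r + ((i : ℕ) + 1) := by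
          simp only [posIdx, if_neg hi, List.length_append, List.length_cons,
            List.length_nil]
          omega
        have e2 : posIdx r (P ++ [a]) i = P.length - 4 * r + ((i : ℕ) + 1) := by
          simp only [posIdx, if_neg hi, List.length_append, List.length_cons,
            List.length_nil]
          omega
        have e3 : posIdx r P i1 = P.length - 4 * r + ((i : ℕ) + 1) := by
          simp only [posIdx, hi1]
          rw [if_neg (by omega)]
        have e3' : posIdx r P' i1 = P'.length - 4 * r + ((i : ℕ) + 1) := by
          simp only [posIdx, hi1]
          rw [if_neg (by omega)]
        have h0 := hbd' i1
        rw [e3, e3'] at h0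
        have h1 := hbd i
        have b2 : P.length - 4 * r + ((i : ℕ) + 1) < o.length := by omega
        have b1 : P'.length - 4 * r + ((i : ℕ) + 1) < o'.length := by omega
        rw [e2, List.getD_append o [c] default _ b2] at h1
        rw [e1, List.getD_append o' [c] default _ b1, h0]
        exact h1
  · -- consistency
    intro j hj hjlt
    have hjlt' : j + r < P'.length + 1 := by simpa using hjlt
    unfold consistentAt
    have ht : j + r + 1 - (j - r) = 2 * r + 1 := by omega
    rw [ht, hz']
    by_cases hcase : j + r < P'.length
    · have h2 := hcons' j hj hcase
      unfold consistentAt at h2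
      rw [ht] at h2
      have hd : j - r ≤ (P'.zip o').length := by omega
      rw [List.drop_append_of_le_length hd]
      have htk : 2 * r + 1 ≤ ((P'.zip o').drop (j - r)).length := by
        simp [hz'l]; omega
      rw [List.take_append_of_le_length htk]
      exact h2
    · -- the final window: j - r = P'.length - 2r
      have hje : j + r = P'.length := by omega
      have h3 := hcons (P.length - r) (by omega) (by simp; omega)
      unfold consistentAt at h3
      have ht3 : (P.length - r) + r + 1 - ((P.length - r) - r) = 2 * r + 1 := by omega
      have hd3 : (P.length - r) - r = P.length - 2 * r := by omega
      rw [ht3, hd3, hz] at h3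
      have hjr : j - r = P'.length - 2 * r := by omega
      rw [hjr]
      -- identify the two last windows
      have hodrop : o.drop (P.length - 2 * r) = o'.drop (P'.length - 2 * r) :=
        dropBoundary r P P' o o' hP hP' ho ho' hbd'
      have hdl : P'.length - 2 * r ≤ (P'.zip o').length := by omega
      have hdl' : P.length - 2 * r ≤ (P.zip o).length := by omega
      have hwin : (P'.zip o' ++ [(a, c)]).drop (P'.length - 2 * r)
          = (P.zip o ++ [(a, c)]).drop (P.length - 2 * r) := by
        rw [List.drop_append_of_le_length hdl,
          List.drop_append_of_le_length hdl',
          zipDrop, zipDrop, hsuf, hodrop]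
      rw [hwin]
      exact h3

lemma extend_suffix {α : Type*} (r : ℕ) (hr : 0 < r) (P : List α) (a : α)
    (hP : 4 * r ≤ P.length) :
    (P ++ [a]).drop ((P ++ [a]).length - 2 * r)
      = (P.drop (P.length - 2 * r)).drop 1 ++ [a] := by
  have h1 : (P ++ [a]).length - 2 * r = P.length + 1 - 2 * r := by simp
  have h2 : P.length + 1 - 2 * r ≤ P.length := by omega
  rw [h1, List.drop_append_of_le_length h2, List.drop_drop]
  congr 2
  omega

/-- The type relation is an equivalence relation, and it is a congruence with respect to
appending a symbol (so the type of `P ++ [a]` is a function of the type of `P` and `a`). -/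
theorem stmt13 [Inhabited Sout] (r : ℕ) (hr : 0 < r)
    (ok : List (Sin × Sout) → Prop) :
    Equivalence (pathEquiv (Sin := Sin) (Sout := Sout) r ok) ∧
    ∀ (P P' : List Sin) (a : Sin),
      pathEquiv r ok P P' → pathEquiv r ok (P ++ [a]) (P' ++ [a]) := by
  constructor
  · constructor
    · exact pathEquiv_refl r ok
    · intro P P' h
      by_cases hc : 4 * r ≤ P.length ∧ 4 * r ≤ P'.length
      · rw [pathEquiv, if_pos hc] at h
        rw [pathEquiv, if_pos ⟨hc.2, hc.1⟩]
        exact ⟨h.1.symm, h.2.1.symm, fun L => (h.2.2 L).symm⟩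
      · rw [pathEquiv, if_neg hc] at h
        rw [h]; exact pathEquiv_refl r ok P'
    · intro P P' P'' h1 h2
      by_cases c1 : 4 * r ≤ P.length ∧ 4 * r ≤ P'.length
      · rw [pathEquiv, if_pos c1] at h1
        by_cases c2 : 4 * r ≤ P'.length ∧ 4 * r ≤ P''.length
        · rw [pathEquiv, if_pos c2] at h2
          rw [pathEquiv, if_pos ⟨c1.1, c2.2⟩]
          exact ⟨h1.1.trans h2.1, h1.2.1.trans h2.2.1,
            fun L => (h1.2.2 L).trans (h2.2.2 L)⟩
        · rw [pathEquiv, if_neg c2] at h2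
          rw [← h2, pathEquiv, if_pos c1]; exact h1
      · rw [pathEquiv, if_neg c1] at h1
        rw [h1]; exact h2
  · intro P P' a h
    by_cases hc : 4 * r ≤ P.length ∧ 4 * r ≤ P'.length
    · rw [pathEquiv, if_pos hc] at h
      obtain ⟨hpre, hsuf, hiff⟩ := h
      rw [pathEquiv, if_pos (by constructor <;> (simp; omega))]
      refine ⟨?_, ?_, fun L =>
        ⟨extend_step r hr ok P P' a hc.1 hc.2 hsuf (fun L' => (hiff L').mp) L,
         extend_step r hr ok P' P a hc.2 hc.1 hsuf.symm (fun L' => (hiff L').mpr) L⟩⟩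
      · have t1 : 2 * r ≤ P.length := by omega
        have t2 : 2 * r ≤ P'.length := by omega
        rw [List.take_append_of_le_length t1, List.take_append_of_le_length t2]
        exact hpre
      · rw [extend_suffix r hr P a hc.1, extend_suffix r hr P' a hc.2, hsuf]
    · rw [pathEquiv, if_neg hc] at h
      rw [h]; exact pathEquiv_refl r ok (P' ++ [a])
end

section
/- Let Σ_out be a finite set, r ≥ 1, and consider an LCL on directed paths of checking radius r. Let G be a directed path, P a subpath of G, and P' a path with Type(P') = Type(P) (with respect to the extendibility-based type equivalence). If L is a complete output labeling of G that is locally consistent at all positions of P, then the graph G' obtained by replacing P with P' in G admits a complete output labeling L' such that (i) L' agrees with L on all positions of G outside P (under the natural correspondence), (ii) L' is locally consistent at every position outside P where L was locally consistent, and (iii) L' is locally consistent at all positions of P'. -/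
/-! The part `LP` of `L` on `P` is consistent on the interior of `P`, so its boundary
labeling is extendible on `P`, hence on `P'` by the type equality; `L'` is `L` with `LP`
replaced by such an extension `LP'`. The labeled paths `P.zip LP` and `P'.zip LP'` then agree
on their first and last `2r` nodes. A radius-`r` window of the new path either lies inside
`P'` at distance `≥ r` from its ends, where `LP'` is consistent, or sees of `P'` only its first
or last `2r` nodes, and then it is the corresponding window of the old path. -/

variable {Sin Sout : Type*}

theorem List.take_zip {α β : Type*} (l : List α) (l' : List β) (n : ℕ) :
    (l.zip l').take n = (l.take n).zip (l'.take n) :=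
  List.take_zipWith

theorem List.drop_zip {α β : Type*} (l : List α) (l' : List β) (n : ℕ) :
    (l.zip l').drop n = (l.drop n).zip (l'.drop n) :=
  List.drop_zipWith

theorem List.zip_append_append {α β : Type*} {A P B : List α} {LA LP LB : List β}
    (hA : LA.length = A.length) (hP : LP.length = P.length) :
    (A ++ P ++ B).zip (LA ++ LP ++ LB) = A.zip LA ++ P.zip LP ++ B.zip LB := by
  rw [List.zip_append (by simp [hA, hP]), List.zip_append hA.symm]

theorem List.exists_eq_append_append {α : Type*} (L : List α) (a p : ℕ)
    (h : a + p ≤ L.length) :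
    ∃ LA LP LB : List α, L = LA ++ LP ++ LB ∧ LA.length = a ∧ LP.length = p :=
  ⟨L.take a, (L.drop a).take p, L.drop (a + p),
    by rw [← List.drop_drop, List.append_assoc, List.take_append_drop, List.take_append_drop],
    by simp only [List.length_take]; omega,
    by simp only [List.length_take, List.length_drop]; omega⟩

theorem List.take_eq_take_of_getD_eq {α : Type*} {l l' : List α} {k : ℕ} {d : α}
    (hk : k ≤ l.length) (hk' : k ≤ l'.length) (h : ∀ i < k, l.getD i d = l'.getD i d) :
    l.take k = l'.take k := by
  apply List.ext_getElem (by simp only [List.length_take]; omega)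
  intro i hi _
  simp only [List.length_take] at hi
  have := h i (by omega)
  rw [List.getD_eq_getElem _ _ (by omega), List.getD_eq_getElem _ _ (by omega)] at this
  simpa only [List.getElem_take] using this

theorem List.drop_eq_drop_of_getD_eq {α : Type*} {l l' : List α} {k : ℕ} {d : α}
    (hk : k ≤ l.length) (hk' : k ≤ l'.length)
    (h : ∀ i < k, l.getD (l.length - k + i) d = l'.getD (l'.length - k + i) d) :
    l.drop (l.length - k) = l'.drop (l'.length - k) := by
  apply List.ext_getElem (by simp only [List.length_drop]; omega)
  intro i hi _
  simp only [List.length_drop] at hi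
  have := h i (by omega)
  rw [List.getD_eq_getElem _ _ (by omega), List.getD_eq_getElem _ _ (by omega)] at this
  simpa only [List.getElem_drop] using this

section Window

variable {α : Type*} {r : ℕ}

def window (r : ℕ) (l : List α) (j : ℕ) : List α :=
  (l.drop (j - r)).take (j + r + 1 - (j - r))

theorem consistentAt_iff_window {ok : List (Sin × Sout) → Prop} {P : List Sin}
    {out : List Sout} {j : ℕ} :
    consistentAt r ok P out j ↔ ok (window r (P.zip out) j) :=
  Iff.rfl

theorem window_eq_of_take_eq {l l' : List α} {m j : ℕ} (h : l.take m = l'.take m)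
    (hj : j + r < m) : window r l j = window r l' j := by
  have hm : j - r + (j + r + 1 - (j - r)) ≤ m := by omega
  unfold window
  rw [List.take_drop, List.take_drop, ← Nat.min_eq_left hm, ← List.take_take, h, List.take_take]

theorem window_append_of_lt {X Y : List α} {j : ℕ} (hj : j + r < X.length) :
    window r (X ++ Y) j = window r X j :=
  window_eq_of_take_eq (by rw [List.take_left, List.take_length]) hj

theorem window_drop (l : List α) (s : ℕ) {d : ℕ} (hd : r ≤ d) :
    window r (l.drop s) d = window r l (s + d) := by
  unfold window
  rw [List.drop_drop, show s + d - r = s + (d - r) by omega,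
    show s + d + r + 1 - (s + (d - r)) = d + r + 1 - (d - r) by omega]

theorem window_append_length_add {X Y : List α} {j : ℕ} (hj : r ≤ j) :
    window r (X ++ Y) (X.length + j) = window r Y j := by
  rw [← window_drop _ _ hj, List.drop_left]

theorem window_append_append_middle {X Y Z : List α} {j : ℕ} (hj : r ≤ j)
    (hjY : j + r < Y.length) : window r (X ++ Y ++ Z) (X.length + j) = window r Y j := by
  rw [List.append_assoc, window_append_length_add hj, window_append_of_lt hjY]

theorem window_splice_of_take_eq {X Y Y' Z : List α} {k j : ℕ} (h : Y.take k = Y'.take k)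
    (hk : k ≤ Y.length) (hk' : k ≤ Y'.length) (hj : j + r < X.length + k) :
    window r (X ++ Y ++ Z) j = window r (X ++ Y' ++ Z) j := by
  refine window_eq_of_take_eq ?_ hj
  rw [List.append_assoc, List.append_assoc, List.take_length_add_append,
    List.take_length_add_append, List.take_append_of_le_length hk,
    List.take_append_of_le_length hk', h]

theorem window_splice_of_drop_eq {X Y Y' Z : List α} {s s' e : ℕ} (h : Y.drop s = Y'.drop s')
    (hs : s ≤ Y.length) (hs' : s' ≤ Y'.length) (he : r ≤ e) :
    window r (X ++ Y ++ Z) (X.length + s + e) = window r (X ++ Y' ++ Z) (X.length + s' + e) := by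
  rw [← window_drop _ _ he, ← window_drop _ _ he, List.append_assoc, List.append_assoc,
    List.drop_length_add_append, List.drop_length_add_append,
    List.drop_append_of_le_length hs, List.drop_append_of_le_length hs', h]

end Window

theorem zip_take_drop_eq_of_getD_posIdx_eq [Inhabited Sout] {r : ℕ} {P P' : List Sin}
    {out out' : List Sout} (hlen : out.length = P.length) (hlen' : out'.length = P'.length)
    (h4 : 4 * r ≤ P.length) (h4' : 4 * r ≤ P'.length)
    (hpre : P.take (2 * r) = P'.take (2 * r))
    (hsuf : P.drop (P.length - 2 * r) = P'.drop (P'.length - 2 * r))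
    (hb : ∀ i : Fin (4 * r),
      out'.getD (posIdx r P' i) default = out.getD (posIdx r P i) default) :
    (P.zip out).take (2 * r) = (P'.zip out').take (2 * r) ∧
      (P.zip out).drop (P.length - 2 * r) = (P'.zip out').drop (P'.length - 2 * r) := by
  have hout : out.take (2 * r) = out'.take (2 * r) := by
    refine List.take_eq_take_of_getD_eq (d := default) (by omega) (by omega) fun i hi => ?_
    simpa [posIdx, hi] using (hb ⟨i, by omega⟩).symm
  have hout' : out.drop (P.length - 2 * r) = out'.drop (P'.length - 2 * r) := by
    rw [← hlen, ← hlen']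
    refine List.drop_eq_drop_of_getD_eq (d := default) (by omega) (by omega) fun i hi => ?_
    have := (hb ⟨2 * r + i, by omega⟩).symm
    simp only [posIdx, show ¬ 2 * r + i < 2 * r by omega, if_false] at this
    rwa [show P.length - 4 * r + (2 * r + i) = out.length - 2 * r + i by omega,
      show P'.length - 4 * r + (2 * r + i) = out'.length - 2 * r + i by omega] at this
  rw [List.take_zip, List.take_zip, List.drop_zip, List.drop_zip, hpre, hsuf, hout, hout']
  exact ⟨rfl, rfl⟩

section Splice

variable {r : ℕ} {ok : List (Sin × Sout) → Prop} {A P P' B : List Sin}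
  {LA LP LP' LB : List Sout}

theorem consistentAt_append_append_middle {j : ℕ} (hA : LA.length = A.length)
    (hP : LP.length = P.length) (hj : r ≤ j) (hjP : j + r < P.length) :
    consistentAt r ok (A ++ P ++ B) (LA ++ LP ++ LB) (A.length + j) ↔
      consistentAt r ok P LP j := by
  have hzA : (A.zip LA).length = A.length := by simp [hA]
  have hzP : (P.zip LP).length = P.length := by simp [hP]
  rw [consistentAt_iff_window, consistentAt_iff_window, List.zip_append_append hA hP, ← hzA,
    window_append_append_middle hj (by omega)]

theorem consistentAt_splice_of_lt {j : ℕ} (hA : LA.length = A.length)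
    (hP : LP.length = P.length) (hP' : LP'.length = P'.length)
    (h2r : 2 * r ≤ P.length) (h2r' : 2 * r ≤ P'.length)
    (hpre : (P.zip LP).take (2 * r) = (P'.zip LP').take (2 * r)) (hj : j < A.length + r) :
    consistentAt r ok (A ++ P ++ B) (LA ++ LP ++ LB) j ↔
      consistentAt r ok (A ++ P' ++ B) (LA ++ LP' ++ LB) j := by
  rw [consistentAt_iff_window, consistentAt_iff_window, List.zip_append_append hA hP,
    List.zip_append_append hA hP',
    window_splice_of_take_eq hpre (by simp [hP, h2r]) (by simp [hP', h2r']) (by simp [hA]; omega)]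

theorem consistentAt_splice_of_le {e : ℕ} (hA : LA.length = A.length)
    (hP : LP.length = P.length) (hP' : LP'.length = P'.length)
    (hsuf : (P.zip LP).drop (P.length - 2 * r) = (P'.zip LP').drop (P'.length - 2 * r))
    (he : r ≤ e) :
    consistentAt r ok (A ++ P ++ B) (LA ++ LP ++ LB) (A.length + (P.length - 2 * r) + e) ↔
      consistentAt r ok (A ++ P' ++ B) (LA ++ LP' ++ LB)
        (A.length + (P'.length - 2 * r) + e) := by
  have hzA : (A.zip LA).length = A.length := by simp [hA]
  rw [consistentAt_iff_window, consistentAt_iff_window, List.zip_append_append hA hP,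
    List.zip_append_append hA hP', ← hzA,
    window_splice_of_drop_eq hsuf (by simp [hP]) (by simp [hP']) he]

theorem consistentAt_splice (hA : LA.length = A.length)
    (hP : LP.length = P.length) (hP' : LP'.length = P'.length)
    (h2r : 2 * r ≤ P.length) (h2r' : 2 * r ≤ P'.length)
    (hpre : (P.zip LP).take (2 * r) = (P'.zip LP').take (2 * r))
    (hsuf : (P.zip LP).drop (P.length - 2 * r) = (P'.zip LP').drop (P'.length - 2 * r))
    (hcons : ∀ j, A.length ≤ j → j < A.length + P.length →
      consistentAt r ok (A ++ P ++ B) (LA ++ LP ++ LB) j)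
    (hcons' : ∀ j, r ≤ j → j + r < P'.length → consistentAt r ok P' LP' j)
    (j : ℕ) (hjA : A.length ≤ j) (hjP' : j < A.length + P'.length) :
    consistentAt r ok (A ++ P' ++ B) (LA ++ LP' ++ LB) j := by
  by_cases hleft : j < A.length + r
  · exact (consistentAt_splice_of_lt hA hP hP' h2r h2r' hpre hleft).1 (hcons j hjA (by omega))
  by_cases hright : A.length + P'.length ≤ j + r
  · obtain ⟨e, rfl⟩ : ∃ e, j = A.length + (P'.length - 2 * r) + e :=
      ⟨j - A.length - (P'.length - 2 * r), by omega⟩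
    exact (consistentAt_splice_of_le hA hP hP' hsuf (by omega)).1 (hcons _ (by omega) (by omega))
  obtain ⟨i, rfl⟩ : ∃ i, j = A.length + i := ⟨j - A.length, by omega⟩
  exact (consistentAt_append_append_middle hA hP' (by omega) (by omega)).2
    (hcons' i (by omega) (by omega))

end Splice

theorem stmt14_general [Inhabited Sout] (r : ℕ)
    (ok : List (Sin × Sout) → Prop)
    (A B P P' : List Sin) (hEq : pathEquiv r ok P P')
    (L : List Sout) (hLlen : L.length = (A ++ P ++ B).length)
    (hP : ∀ j, A.length ≤ j → j < A.length + P.length →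
      consistentAt r ok (A ++ P ++ B) L j) :
    ∃ L' : List Sout, L'.length = (A ++ P' ++ B).length ∧
      (∀ j < A.length, L'.getD j default = L.getD j default) ∧
      (∀ j < B.length,
        L'.getD (A.length + P'.length + j) default
          = L.getD (A.length + P.length + j) default) ∧
      (∀ j < A.length, consistentAt r ok (A ++ P ++ B) L j →
        consistentAt r ok (A ++ P' ++ B) L' j) ∧
      (∀ j < B.length,
        consistentAt r ok (A ++ P ++ B) L (A.length + P.length + j) →
        consistentAt r ok (A ++ P' ++ B) L' (A.length + P'.length + j)) ∧
      (∀ j, A.length ≤ j → j < A.length + P'.length →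
        consistentAt r ok (A ++ P' ++ B) L' j) := by
  unfold pathEquiv at hEq
  split_ifs at hEq with hlen
  swap
  · subst hEq
    exact ⟨L, hLlen, fun _ _ => rfl, fun _ _ => rfl, fun _ _ h => h, fun _ _ h => h, hP⟩
  obtain ⟨h4, h4'⟩ := hlen
  obtain ⟨hinpre, hinsuf, hext⟩ := hEq
  simp only [List.length_append] at hLlen
  obtain ⟨LA, LP, LB, rfl, hLA, hLP⟩ := L.exists_eq_append_append A.length P.length (by omega)
  obtain ⟨LP', hLP', hbd, hcons'⟩ := (hext _).1 ⟨LP, hLP, fun _ => rfl, fun j hj hjP =>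
    (consistentAt_append_append_middle hLA hLP hj hjP).1 (hP _ (by omega) (by omega))⟩
  obtain ⟨hpre, hsuf⟩ :=
    zip_take_drop_eq_of_getD_posIdx_eq hLP hLP' h4 h4' hinpre hinsuf hbd
  refine ⟨LA ++ LP' ++ LB, ?_, fun j hj => ?_, fun j hj => ?_, fun j hj => ?_, fun j hj => ?_,
    consistentAt_splice hLA hLP hLP' (by omega) (by omega) hpre hsuf hP hcons'⟩
  · simp only [List.length_append] at hLlen ⊢
    omega
  · rw [List.append_assoc, List.append_assoc, List.getD_append _ _ _ _ (hLA ▸ hj),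
      List.getD_append _ _ _ _ (hLA ▸ hj)]
  · rw [List.getD_append_right _ _ _ _ (by simp [hLA, hLP']),
      List.getD_append_right _ _ _ _ (by simp [hLA, hLP])]
    simp only [List.length_append, hLA, hLP, hLP', Nat.add_sub_cancel_left]
  · exact (consistentAt_splice_of_lt hLA hLP hLP' (by omega) (by omega) hpre (by omega)).1
  · rw [show A.length + P.length + j = A.length + (P.length - 2 * r) + (2 * r + j) by omega,
      show A.length + P'.length + j = A.length + (P'.length - 2 * r) + (2 * r + j) by omega]
    exact (consistentAt_splice_of_le hLA hLP hLP' hsuf (by omega)).1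

/-- Replacing a subpath `P` of `G = A ++ P ++ B` by a path `P'` of the same type:
any complete labeling `L` of `G` locally consistent on `P` yields a labeling `L'` of
`G' = A ++ P' ++ B` agreeing with `L` outside `P`, preserving local consistency outside
`P`, and locally consistent at all positions of `P'`. -/
theorem stmt14 [Inhabited Sin] [Inhabited Sout] (r : ℕ) (hr : 0 < r)
    (ok : List (Sin × Sout) → Prop)
    (A B P P' : List Sin) (hEq : pathEquiv r ok P P')
    (L : List Sout) (hLlen : L.length = (A ++ P ++ B).length)
    (hP : ∀ j, A.length ≤ j → j < A.length + P.length →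
      consistentAt r ok (A ++ P ++ B) L j) :
    ∃ L' : List Sout, L'.length = (A ++ P' ++ B).length ∧
      (∀ j < A.length, L'.getD j default = L.getD j default) ∧
      (∀ j < B.length,
        L'.getD (A.length + P'.length + j) default
          = L.getD (A.length + P.length + j) default) ∧
      (∀ j < A.length, consistentAt r ok (A ++ P ++ B) L j →
        consistentAt r ok (A ++ P' ++ B) L' j) ∧
      (∀ j < B.length,
        consistentAt r ok (A ++ P ++ B) L (A.length + P.length + j) →
        consistentAt r ok (A ++ P' ++ B) L' (A.length + P'.length + j)) ∧
      (∀ j, A.length ≤ j → j < A.length + P'.length →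
        consistentAt r ok (A ++ P' ++ B) L' j) :=
  stmt14_general r ok A B P P' hEq L hLlen hP
end
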